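/- In the metaplectic group Mp(2,ℤ), the generator ŝ has order exactly 8, the generator û has order exactly 12, ŝ⁴ = û⁶, and ŝ⁴ lies in the center of Mp(2,ℤ); in particular Mp(2,ℤ) contains a central element of order 2. -/

import Mathlib

/-- The relators `ŝ⁸` and `ŝ²·û⁻³` in the free group on two generators,
where `false` stands for `û` and `true` stands for `ŝ`. -/
def mpRels : Set (FreeGroup Bool) :=
  {(FreeGroup.of true) ^ 8, (FreeGroup.of true) ^ 2 * ((FreeGroup.of false) ^ 3)⁻¹}

/-- The metaplectic group `Mp(2,ℤ) = ⟨û, ŝ ∣ ŝ⁸ = 1, ŝ² = û³⟩`. -/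
abbrev Mp : Type := PresentedGroup mpRels

/-- The generator `û` of `Mp(2,ℤ)`. -/
def uhat : Mp := PresentedGroup.of false

/-- The generator `ŝ` of `Mp(2,ℤ)`. -/
def shat : Mp := PresentedGroup.of true

/-! Sending `û ↦ 2`, `ŝ ↦ 3` respects both relations in `ℤ/24` (`8·3 = 24`, `2·3 = 3·2`),
and there the images of `ŝ` and `û` have orders `8` and `12`; this bounds the orders in
`Mp(2,ℤ)` from below, while `ŝ⁸ = 1` and `û¹² = (û³)⁴ = ŝ⁸ = 1` bound them from above.
The element `ŝ⁴ = û⁶` is a power of each generator, so it commutes with both and is central;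
its order is `8 / 4 = 2`. -/

theorem orderOf_eq_of_pow_eq_one_of_orderOf_map {G H : Type*} [Monoid G] [Monoid H]
    (f : G →* H) {x : G} {n : ℕ} (hx : x ^ n = 1) (hfx : orderOf (f x) = n) :
    orderOf x = n :=
  Nat.dvd_antisymm (orderOf_dvd_of_pow_eq_one hx) (hfx ▸ orderOf_map_dvd f x)

theorem PresentedGroup.mem_center_iff_forall_commute_of {α : Type*} {rels : Set (FreeGroup α)}
    {z : PresentedGroup rels} : z ∈ Subgroup.center (PresentedGroup rels) ↔
      ∀ a, Commute (PresentedGroup.of a) z := by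
  rw [Subgroup.center_eq_iInf (PresentedGroup.closure_range_of rels)]
  simp [Subgroup.mem_centralizer_singleton_iff, Commute, SemiconjBy, eq_comm]

theorem shat_pow_eight : shat ^ 8 = 1 :=
  PresentedGroup.one_of_mem (x := FreeGroup.of true ^ 8) (Or.inl rfl)

theorem shat_sq_eq_uhat_pow_three : shat ^ 2 = uhat ^ 3 :=
  PresentedGroup.mk_eq_mk_of_mul_inv_mem (Or.inr rfl)

theorem shat_pow_four_eq_uhat_pow_six : shat ^ 4 = uhat ^ 6 := by
  rw [show 4 = 2 * 2 from rfl, pow_mul, shat_sq_eq_uhat_pow_three, ← pow_mul]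

theorem uhat_pow_twelve : uhat ^ 12 = 1 := by
  rw [show 12 = 3 * 4 from rfl, pow_mul, ← shat_sq_eq_uhat_pow_three, ← pow_mul]
  exact shat_pow_eight

theorem mpRels_lift_zmod24_eq_one :
    ∀ r ∈ mpRels, FreeGroup.lift
      (fun b : Bool => Multiplicative.ofAdd (if b then 3 else 2 : ZMod 24)) r = 1 := by
  rintro r (rfl | rfl) <;>
    simp only [map_mul, map_pow, map_inv, FreeGroup.lift_apply_of, ↓reduceIte,
      Bool.false_eq_true] <;>
    decide

def Mp.toZMod24 : Mp →* Multiplicative (ZMod 24) :=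
  PresentedGroup.toGroup mpRels_lift_zmod24_eq_one

theorem orderOf_ofAdd_natCast_zmod (n a : ℕ) [NeZero n] :
    orderOf (Multiplicative.ofAdd (a : ZMod n)) = n / n.gcd a := by
  rw [orderOf_ofAdd_eq_addOrderOf, ZMod.addOrderOf_coe a (NeZero.ne n)]

theorem orderOf_shat : orderOf shat = 8 :=
  orderOf_eq_of_pow_eq_one_of_orderOf_map Mp.toZMod24 shat_pow_eight
    (orderOf_ofAdd_natCast_zmod 24 3)

theorem orderOf_uhat : orderOf uhat = 12 :=
  orderOf_eq_of_pow_eq_one_of_orderOf_map Mp.toZMod24 uhat_pow_twelve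
    (orderOf_ofAdd_natCast_zmod 24 2)

theorem shat_pow_four_mem_center : shat ^ 4 ∈ Subgroup.center Mp := by
  refine PresentedGroup.mem_center_iff_forall_commute_of.mpr fun b => ?_
  cases b
  · rw [shat_pow_four_eq_uhat_pow_six]
    exact Commute.self_pow uhat 6
  · exact Commute.self_pow shat 4

theorem orderOf_shat_pow_four : orderOf (shat ^ 4) = 2 := by
  rw [orderOf_pow_of_dvd (by norm_num) (by rw [orderOf_shat]; norm_num), orderOf_shat]

/-- In `Mp(2,ℤ)`: `ŝ` has order exactly `8`, `û` has order exactly `12`, `ŝ⁴ = û⁶`,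
`ŝ⁴` is central; in particular `Mp(2,ℤ)` contains a central element of order `2`. -/
theorem mp2z_orders_and_center :
    orderOf shat = 8 ∧ orderOf uhat = 12 ∧ shat ^ 4 = uhat ^ 6 ∧
    shat ^ 4 ∈ Subgroup.center Mp ∧
    ∃ z ∈ Subgroup.center Mp, orderOf z = 2 :=
  ⟨orderOf_shat, orderOf_uhat, shat_pow_four_eq_uhat_pow_six, shat_pow_four_mem_center,
    shat ^ 4, shat_pow_four_mem_center, orderOf_shat_pow_four⟩
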